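/- arXiv:2507.23706 — 2 statements merged into one kernel-verified Lean document; each statement's English description precedes it below -/
import Mathlib

section
/- Let A > 1 be an integer. The random variable ℓ_w/ℓ_p on Π_A(N) with the uniform measure converges in probability to the constant A + 1: for every ε > 0, |{C ∈ Π_A(N) : |ℓ_w(C)/ℓ_p(C) − (A+1)| > ε}| / π_A(N) → 0 as N → ∞ along even integers. -/
open Filter

namespace Winding

/-- Words of length `n` over the alphabet `{1,…,A}`; the `i`-th letter is `(α i).1 + 1`. -/
abbrev Word (A n : ℕ) : Type := Fin n → Fin A

/-- The `i`-th partial quotient `a_{i+1} ∈ {1,…,A}` of a word. -/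
def letter {A n : ℕ} (α : Word A n) (i : Fin n) : ℕ := (α i).1 + 1

/-- `α` has period `d`: `d` is a positive divisor of `n` and `a_i = a_{i+d}` whenever in range. -/
def HasPeriod {A n : ℕ} (α : Word A n) (d : ℕ) : Prop :=
  0 < d ∧ d ∣ n ∧
    ∀ (i : ℕ) (h : i + d < n),
      α ⟨i, Nat.lt_of_le_of_lt (Nat.le_add_right i d) h⟩ = α ⟨i + d, h⟩

/-- The minimal period of a word. -/
noncomputable def mp {A n : ℕ} (α : Word A n) : ℕ := sInf {d | HasPeriod α d}

/-- A word of even length `n` is primitive if `mp α = n`, or `n/2` is odd and `mp α = n/2`. -/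
def Primitive {A n : ℕ} (α : Word A n) : Prop :=
  mp α = n ∨ (Odd (n / 2) ∧ mp α = n / 2)

/-- Cyclic shift of a word by `s` positions. -/
def shift {A n : ℕ} (s : ℕ) (α : Word A n) : Word A n :=
  fun i => α ⟨(i.1 + s) % n, Nat.mod_lt _ i.pos⟩

/-- Even cyclic shift relation. -/
def ShiftRel (A n : ℕ) (α β : Word A n) : Prop :=
  ∃ s : ℕ, Even s ∧ β = shift s α

/-- Primitive words of length `n`. -/
def PrimWord (A n : ℕ) : Type := {α : Word A n // Primitive α}

instance {A n : ℕ} : Finite (PrimWord A n) := by unfold PrimWord; infer_instance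

/-- `P_n`: equivalence classes of primitive words of length `n` under even cyclic shifts. -/
def GeodClass (A n : ℕ) : Type :=
  Quot (fun α β : PrimWord A n => ShiftRel A n α.1 β.1)

instance {A n : ℕ} : Finite (GeodClass A n) :=
  Finite.of_surjective _ (Quot.mk_surjective)

instance (N : ℕ) : Finite {n : ℕ // n ≤ N ∧ Even n} :=
  Finite.of_injective (fun x => (⟨x.1, Nat.lt_succ_of_le x.2.1⟩ : Fin (N + 1)))
    fun x y h => Subtype.ext (by simpa using congrArg Fin.val h)

/-- `Π_A(N)`: the disjoint union of the `P_n` over even `n ≤ N`. -/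
def Geod (A N : ℕ) : Type := Σ n : {n : ℕ // n ≤ N ∧ Even n}, GeodClass A n.1

instance {A N : ℕ} : Finite (Geod A N) := by unfold Geod; infer_instance

/-- `π_A(N) = |Π_A(N)|`. -/
noncomputable def piA (A N : ℕ) : ℕ := Nat.card (Geod A N)

/-- The winding number `Ψ(α) = a_1 - a_2 + a_3 - ⋯ - a_n`. -/
def winding {A n : ℕ} (α : Word A n) : ℤ :=
  ∑ i : Fin n, (-1) ^ (i : ℕ) * (letter α i : ℤ)

/-- Winding number of a closed geodesic (well defined on classes since `Ψ` is invariant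
under even cyclic shifts; here computed on a choice of representative). -/
noncomputable def windingG {A N : ℕ} (C : Geod A N) : ℤ := winding C.2.out.1

/-- Period length `ℓ_p` of a closed geodesic. -/
def plenG {A N : ℕ} (C : Geod A N) : ℕ := C.1.1

/-- Word length `ℓ_w(α) = 2 ∑ a_i`. -/
def wlen {A n : ℕ} (α : Word A n) : ℕ := 2 * ∑ i : Fin n, letter α i

/-- Word length of a closed geodesic. -/
noncomputable def wlenG {A N : ℕ} (C : Geod A N) : ℕ := wlen C.2.out.1

/-- Value of a finite continued fraction `b_1 + 1/(b_2 + 1/(⋯ + 1/b_k))`. -/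
noncomputable def cfVal : List ℕ → ℝ
  | [] => 0
  | b :: l => b + 1 / cfVal l

/-- The block `l` repeated `m` times. -/
def repBlock (l : List ℕ) : ℕ → List ℕ
  | 0 => []
  | m + 1 => l ++ repBlock l m

/-- Value of the purely periodic continued fraction with repeating block `l`:
the limit of the values of the finite continued fractions obtained by repeating `l`. -/
noncomputable def periodicVal (l : List ℕ) : ℝ :=
  limUnder atTop fun m => cfVal (repBlock l m)

/-- The list of partial quotients of a word. -/
def toList {A n : ℕ} (α : Word A n) : List ℕ := List.ofFn (letter α)

/-- `T^j ᾱ`: the purely periodic continued fraction whose repeating block is the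
cyclic shift of `α` by `j`. -/
noncomputable def Tpow {A n : ℕ} (α : Word A n) (j : ℕ) : ℝ :=
  periodicVal (toList (shift j α))

/-- Geometric length `ℓ_g(α) = 2 ∑_{j=1}^n log (T^j ᾱ)`. -/
noncomputable def glen {A n : ℕ} (α : Word A n) : ℝ :=
  2 * ∑ j : Fin n, Real.log (Tpow α (j.1 + 1))

/-- Geometric length of a closed geodesic. -/
noncomputable def glenG {A N : ℕ} (C : Geod A N) : ℝ := glen C.2.out.1

/-!
With the centred letter values `f v = 2v + 1 - A`, which sum to zero over the alphabet, one has
`ℓ_w(α)/n - (A + 1) = (1/n) ∑ᵢ f(αᵢ)`. Expanding `(f x + t)⁴` and inducting on the length gives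
the fourth-moment bound `∑_α (∑ᵢ f(αᵢ))⁴ ≤ 3 n² A⁴ Aⁿ`, so by Markov at most `3 A⁴ Aⁿ / (n² ε⁴)`
words of length `n` deviate by more than `ε`. Distinct deviating classes have distinct deviating
representatives, and summing over even `n ≤ 2k` leaves `O(A^{2k} / k²)` deviating classes.
Conversely, a non-primitive word of length `2k` is determined by its minimal period `≤ k` and its
first `k` letters, and a class consists of at most `k` even shifts of one word, so
`π_A(2k) ≥ A^{2k} / (2k)`. The proportion of deviating classes is therefore `O(1/k)`.
-/

section WordSums

variable {ι : Type*} (f : ι → ℝ)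

def wordSum {n : ℕ} (w : Fin n → ι) : ℝ := ∑ i, f (w i)

lemma wordSum_cons {n : ℕ} (x : ι) (w : Fin n → ι) :
    wordSum f (Fin.cons x w : Fin (n + 1) → ι) = f x + wordSum f w := by
  simp [wordSum, Fin.sum_univ_succ]

variable [Fintype ι]

lemma sum_fun_fin_succ {M : Type*} [AddCommMonoid M] {n : ℕ} (g : (Fin (n + 1) → ι) → M) :
    ∑ w, g w = ∑ w : Fin n → ι, ∑ x, g (Fin.cons x w) := by
  rw [← (Fin.consEquiv fun _ => ι).sum_comp, Fintype.sum_prod_type, Finset.sum_comm]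
  rfl

lemma sum_wordSum_pow_succ {n p : ℕ} :
    ∑ w : Fin (n + 1) → ι, wordSum f w ^ p =
      ∑ w : Fin n → ι, ∑ x, (f x + wordSum f w) ^ p := by
  simp only [sum_fun_fin_succ, wordSum_cons]

variable {f}

lemma sum_wordSum_eq_zero (hf : ∑ x, f x = 0) (n : ℕ) :
    ∑ w : Fin n → ι, wordSum f w = 0 := by
  induction n with
  | zero => simp [wordSum]
  | succ n ih =>
    have h := sum_wordSum_pow_succ f (n := n) (p := 1)
    simp only [pow_one] at h
    simp [h, Finset.sum_add_distrib, hf, ← Finset.mul_sum, ih]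

lemma sum_add_sq (hf : ∑ x, f x = 0) (t : ℝ) :
    ∑ x, (f x + t) ^ 2 = ∑ x, f x ^ 2 + Fintype.card ι * t ^ 2 := by
  calc ∑ x, (f x + t) ^ 2 = ∑ x, (f x ^ 2 + 2 * t * f x + t ^ 2) :=
        Finset.sum_congr rfl fun _ _ => by ring
    _ = _ := by
        rw [Finset.sum_add_distrib, Finset.sum_add_distrib, ← Finset.mul_sum, hf,
          Finset.sum_const, Finset.card_univ, nsmul_eq_mul]
        ring

lemma sum_add_pow_four (hf : ∑ x, f x = 0) (t : ℝ) :
    ∑ x, (f x + t) ^ 4 = ∑ x, f x ^ 4 + 4 * t * ∑ x, f x ^ 3 + 6 * t ^ 2 * ∑ x, f x ^ 2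
      + Fintype.card ι * t ^ 4 := by
  calc ∑ x, (f x + t) ^ 4 = ∑ x, (f x ^ 4 + 4 * t * f x ^ 3 + 6 * t ^ 2 * f x ^ 2
        + 4 * t ^ 3 * f x + t ^ 4) :=
        Finset.sum_congr rfl fun _ _ => by ring
    _ = _ := by
        simp only [Finset.sum_add_distrib, ← Finset.mul_sum, hf, Finset.sum_const,
          Finset.card_univ, nsmul_eq_mul]
        ring

variable {M : ℝ}

lemma sum_pow_le_of_abs_le (hM : ∀ x, |f x| ≤ M) {p : ℕ} (hp : Even p) :
    ∑ x, f x ^ p ≤ Fintype.card ι * M ^ p := by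
  calc ∑ x, f x ^ p ≤ ∑ _x : ι, M ^ p := Finset.sum_le_sum fun x _ => by
        rw [← hp.pow_abs]; exact pow_le_pow_left₀ (abs_nonneg _) (hM x) p
    _ = _ := by simp

lemma sum_wordSum_sq_le (hf : ∑ x, f x = 0) (hM : ∀ x, |f x| ≤ M) (n : ℕ) :
    ∑ w : Fin n → ι, wordSum f w ^ 2 ≤ n * M ^ 2 * (Fintype.card ι : ℝ) ^ n := by
  induction n with
  | zero => simp [wordSum]
  | succ n ih =>
    have h2 := sum_pow_le_of_abs_le hM even_two
    rw [sum_wordSum_pow_succ]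
    simp only [sum_add_sq hf, Finset.sum_add_distrib, ← Finset.mul_sum, Finset.sum_const,
      Finset.card_univ, Fintype.card_fun, Fintype.card_fin, nsmul_eq_mul]
    push_cast
    calc _ ≤ (Fintype.card ι : ℝ) ^ n * (Fintype.card ι * M ^ 2)
          + Fintype.card ι * (n * M ^ 2 * (Fintype.card ι : ℝ) ^ n) := by gcongr
      _ = _ := by ring

lemma sum_wordSum_pow_four_le (hf : ∑ x, f x = 0) (hM : ∀ x, |f x| ≤ M) (n : ℕ) :
    ∑ w : Fin n → ι, wordSum f w ^ 4 ≤ 3 * n ^ 2 * M ^ 4 * (Fintype.card ι : ℝ) ^ n := by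
  induction n with
  | zero => simp [wordSum]
  | succ n ih =>
    have h2 := sum_pow_le_of_abs_le hM even_two
    have h4 := sum_pow_le_of_abs_le hM (p := 4) (by decide)
    have hS2 := sum_wordSum_sq_le hf hM n
    rw [sum_wordSum_pow_succ]
    simp only [sum_add_pow_four hf, Finset.sum_add_distrib, ← Finset.mul_sum, ← Finset.sum_mul,
      sum_wordSum_eq_zero hf, Finset.sum_const, Finset.card_univ, Fintype.card_fun,
      Fintype.card_fin, nsmul_eq_mul, mul_zero, zero_mul, add_zero]
    push_cast
    calc _ ≤ (Fintype.card ι : ℝ) ^ n * (Fintype.card ι * M ^ 4)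
          + 6 * (n * M ^ 2 * (Fintype.card ι : ℝ) ^ n) * (Fintype.card ι * M ^ 2)
          + Fintype.card ι * (3 * n ^ 2 * M ^ 4 * (Fintype.card ι : ℝ) ^ n) := by gcongr
      _ = 3 * (n + 1) ^ 2 * M ^ 4 * (Fintype.card ι : ℝ) ^ (n + 1)
          - 2 * M ^ 4 * (Fintype.card ι : ℝ) ^ (n + 1) := by ring
      _ ≤ _ := sub_le_self _ (by positivity)

lemma card_lt_abs_wordSum_mul_le (hf : ∑ x, f x = 0) (hM : ∀ x, |f x| ≤ M) (n : ℕ) {c : ℝ}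
    (hc : 0 ≤ c) :
    Nat.card {w : Fin n → ι // c < |wordSum f w|} * c ^ 4
      ≤ 3 * n ^ 2 * M ^ 4 * (Fintype.card ι : ℝ) ^ n := by
  classical
  rw [Nat.card_eq_fintype_card, Fintype.card_subtype, ← nsmul_eq_mul]
  calc _ ≤ ∑ w ∈ Finset.univ.filter (fun w => c < |wordSum f w|), wordSum f w ^ 4 :=
        Finset.card_nsmul_le_sum _ _ _ fun w hw =>
          (pow_le_pow_left₀ hc (Finset.mem_filter.mp hw).2.le 4).trans_eq
            ((by decide : Even 4).pow_abs _)
    _ ≤ ∑ w, wordSum f w ^ 4 :=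
        Finset.sum_le_sum_of_subset_of_nonneg (Finset.filter_subset _ _) fun _ _ _ => by positivity
    _ ≤ _ := sum_wordSum_pow_four_le hf hM n

end WordSums

section Letters

variable {A : ℕ}

def centeredLetter (A : ℕ) (v : Fin A) : ℝ := 2 * v + 1 - A

lemma centeredLetter_rev (v : Fin A) : centeredLetter A v.rev = -centeredLetter A v := by
  have hv : (v : ℕ) + 1 ≤ A := v.2
  simp only [centeredLetter, Fin.val_rev]
  push_cast [Nat.cast_sub hv]
  ring

lemma sum_centeredLetter : ∑ v : Fin A, centeredLetter A v = 0 := by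
  have h := Equiv.sum_comp Fin.revPerm (centeredLetter A)
  simp only [Fin.revPerm_apply, centeredLetter_rev, Finset.sum_neg_distrib] at h
  linarith

lemma abs_centeredLetter_le (v : Fin A) : |centeredLetter A v| ≤ A := by
  have hv : (v : ℝ) + 1 ≤ A := by exact_mod_cast v.2
  rw [abs_le, centeredLetter]
  constructor <;> linarith [(v.1.cast_nonneg : (0 : ℝ) ≤ v)]

lemma wordSum_centeredLetter {n : ℕ} (α : Word A n) :
    wordSum (centeredLetter A) α = wlen α - n * ((A : ℝ) + 1) := by
  simp only [wordSum, centeredLetter, wlen, letter]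
  push_cast
  simp only [mul_add, Finset.sum_sub_distrib, Finset.sum_add_distrib, ← Finset.mul_sum,
    Finset.sum_const, Finset.card_univ, Fintype.card_fin, nsmul_eq_mul]
  ring

def RatioDeviates (ε : ℝ) {n : ℕ} (α : Word A n) : Prop :=
  ε < |(wlen α : ℝ) / n - ((A : ℝ) + 1)|

lemma card_ratioDeviates_le {ε : ℝ} (hε : 0 < ε) {n : ℕ} (hn : 0 < n) :
    (Nat.card {α : Word A n // RatioDeviates ε α} : ℝ)
      ≤ 3 * A ^ 4 * A ^ n / (n ^ 2 * ε ^ 4) := by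
  have hn' : (0 : ℝ) < n := by exact_mod_cast hn
  have hdev : ∀ α : Word A n,
      RatioDeviates ε α ↔ n * ε < |wordSum (centeredLetter A) α| := fun α => by
    rw [RatioDeviates, wordSum_centeredLetter, ← mul_lt_mul_iff_of_pos_left hn',
      ← abs_of_pos hn', ← abs_mul, abs_of_pos hn', mul_sub, mul_div_cancel₀ _ hn'.ne']
  have key := card_lt_abs_wordSum_mul_le (sum_centeredLetter (A := A)) abs_centeredLetter_le n
    (mul_pos hn' hε).le
  rw [Fintype.card_fin, ← Nat.card_congr (Equiv.subtypeEquivRight hdev)] at key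
  rw [le_div_iff₀ (by positivity)]
  refine le_of_mul_le_mul_left ?_ (pow_pos hn' 2)
  linear_combination key

end Letters

section Periods

variable {A n : ℕ}

lemma HasPeriod.apply_mod {α : Word A n} {d : ℕ} (hα : HasPeriod α d) (i : Fin n) :
    α i = α ⟨i % d, (Nat.mod_lt _ hα.1).trans_le (Nat.le_of_dvd i.pos hα.2.1)⟩ := by
  obtain ⟨i, hi⟩ := i
  induction i using Nat.strong_induction_on with
  | _ i ih =>
    by_cases hid : i < d
    · simp only [Nat.mod_eq_of_lt hid]
    · have hd := hα.1
      have hsub : i - d + d = i := Nat.sub_add_cancel (not_lt.mp hid)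
      have hmod : (i - d) % d = i % d := by rw [← Nat.add_mod_right, hsub]
      have step := hα.2.2 (i - d) (hsub.symm ▸ hi)
      simp only [hsub] at step
      rw [← step, ih (i - d) (by omega) (by omega)]
      simp only [hmod]

lemma HasPeriod.ext {α β : Word A n} {d : ℕ} (hα : HasPeriod α d) (hβ : HasPeriod β d)
    (h : ∀ i : Fin n, (i : ℕ) < d → α i = β i) : α = β := by
  funext i
  rw [hα.apply_mod, hβ.apply_mod]
  exact h _ (Nat.mod_lt _ hα.1)

lemma hasPeriod_mp (α : Word A n) : HasPeriod α (mp α) := by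
  refine Nat.sInf_mem (s := {d | HasPeriod α d}) ?_
  rcases n.eq_zero_or_pos with rfl | hn
  · exact ⟨1, one_pos, dvd_zero 1, fun i h => by omega⟩
  · exact ⟨n, hn, dvd_rfl, fun i h => by omega⟩

lemma not_primitive_of_length_zero (α : Word A 0) : ¬ Primitive α := by
  rintro (h | ⟨h, -⟩)
  · exact (hasPeriod_mp α).1.ne' h
  · simp at h

instance : IsEmpty (PrimWord A 0) := ⟨fun α => not_primitive_of_length_zero α.1 α.2⟩

lemma mp_le_half_of_not_primitive (hn : 0 < n) {α : Word A n} (hα : ¬ Primitive α) :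
    mp α ≤ n / 2 := by
  obtain ⟨-, ⟨c, hc⟩, -⟩ := hasPeriod_mp α
  have hc2 : 2 ≤ c := by
    rcases c with _ | _ | c
    · omega
    · exact absurd (Or.inl (by simpa using hc.symm)) hα
    · omega
  rw [Nat.le_div_iff_mul_le two_pos]
  calc mp α * 2 ≤ mp α * c := Nat.mul_le_mul_left _ hc2
    _ = n := hc.symm

lemma card_not_primitive_le (hn : 0 < n) :
    Nat.card {α : Word A n // ¬ Primitive α} ≤ n / 2 * A ^ (n / 2) := by
  have hmp : ∀ α : {α : Word A n // ¬ Primitive α}, mp α.1 - 1 < n / 2 := fun α =>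
    lt_of_lt_of_le (Nat.sub_lt (hasPeriod_mp α.1).1 one_pos) (mp_le_half_of_not_primitive hn α.2)
  let F : {α : Word A n // ¬ Primitive α} → Fin (n / 2) × (Fin (n / 2) → Fin A) :=
    fun α => (⟨mp α.1 - 1, hmp α⟩, fun i => α.1 (Fin.castLE (Nat.div_le_self n 2) i))
  have hF : Function.Injective F := by
    rintro ⟨α, hα⟩ ⟨β, hβ⟩ h
    simp only [F, Prod.mk.injEq, Fin.mk.injEq] at h
    have hd : mp α = mp β := by
      have := (hasPeriod_mp α).1; have := (hasPeriod_mp β).1; omega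
    refine Subtype.ext ((hasPeriod_mp α).ext (hd ▸ hasPeriod_mp β) fun i hi => ?_)
    have hi' : (i : ℕ) < n / 2 := hi.trans_le (mp_le_half_of_not_primitive hn hα)
    exact congrFun h.2 ⟨i, hi'⟩
  simpa using Nat.card_le_card_of_injective F hF

end Periods

section Shifts

variable {A n : ℕ}

lemma shift_shift (s t : ℕ) (α : Word A n) : shift t (shift s α) = shift (s + t) α := by
  funext i
  simp only [shift, Nat.mod_add_mod, add_assoc, add_comm t s]

lemma shift_mod (s : ℕ) (α : Word A n) : shift (s % n) α = shift s α := by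
  funext i
  simp only [shift, Nat.add_mod_mod]

lemma shift_mul_pred_shift (s : ℕ) (α : Word A n) : shift (s * (n - 1)) (shift s α) = α := by
  rw [shift_shift]
  funext i
  have hs : s + s * (n - 1) = s * n := by
    rcases n with _ | n
    · exact i.elim0
    · simp [mul_add, add_comm]
  simp only [shift, hs, Nat.add_mul_mod_self_right, Nat.mod_eq_of_lt i.2]

lemma shiftRel_equivalence : Equivalence (ShiftRel A n) where
  refl α := ⟨0, Even.zero, funext fun i => by simp [shift, Nat.mod_eq_of_lt i.2]⟩
  symm := by
    rintro α β ⟨s, hs, rfl⟩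
    exact ⟨s * (n - 1), hs.mul_right _, (shift_mul_pred_shift s α).symm⟩
  trans := by
    rintro α β γ ⟨s, hs, rfl⟩ ⟨t, ht, rfl⟩
    exact ⟨s + t, hs.add ht, shift_shift s t α⟩

lemma exists_shift_out_eq (hn : Even n) (hpos : 0 < n) (α : PrimWord A n) :
    ∃ j : Fin (n / 2), α.1 = shift (2 * j) (Quot.mk _ α : GeodClass A n).out.1 := by
  have hrel : Relation.EqvGen (fun α β : PrimWord A n => ShiftRel A n α.1 β.1)
      (Quot.mk _ α : GeodClass A n).out α := Quot.eqvGen_exact (Quot.out_eq _)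
  obtain ⟨s, hs, hα⟩ := ((shiftRel_equivalence.comap Subtype.val).eqvGen_iff).mp hrel
  obtain ⟨a, rfl⟩ := hs
  obtain ⟨b, rfl⟩ := hn
  have hb : a % b < b := Nat.mod_lt a (by omega)
  refine ⟨⟨a % b, by omega⟩, ?_⟩
  have hmod : (a + a) % (b + b) = 2 * (a % b) := by
    rw [← two_mul, ← two_mul, Nat.mul_mod_mul_left]
  rw [hα, ← shift_mod, hmod]

end Shifts

section Counting

variable {A : ℕ}

lemma card_primWord_le (n : ℕ) (hn : Even n) (hpos : 0 < n) :
    Nat.card (PrimWord A n) ≤ Nat.card (GeodClass A n) * (n / 2) := by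
  choose j hj using exists_shift_out_eq (A := A) hn hpos
  let F : PrimWord A n → GeodClass A n × Fin (n / 2) := fun α => (Quot.mk _ α, j α)
  have hF : Function.Injective F := by
    intro α β h
    obtain ⟨hq, hj'⟩ := Prod.ext_iff.mp h
    change Quot.mk _ α = Quot.mk _ β at hq
    change j α = j β at hj'
    apply Subtype.ext
    rw [hj α, hj β, hq, hj']
  simpa [Nat.card_prod] using Nat.card_le_card_of_injective F hF

lemma card_primWord_add_card_not_primitive (n : ℕ) :
    Nat.card (PrimWord A n) + Nat.card {α : Word A n // ¬ Primitive α} = A ^ n := by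
  classical
  rw [PrimWord, ← Nat.card_sum, Nat.card_congr (Equiv.sumCompl _)]
  simp

lemma two_mul_le_pow (hA : 1 < A) {k : ℕ} (hk : 1 ≤ k) : 2 * k ≤ A ^ k := by
  obtain ⟨m, rfl⟩ := Nat.exists_eq_add_of_le' hk
  calc 2 * (m + 1) ≤ 2 * 2 ^ m := Nat.mul_le_mul_left 2 Nat.lt_two_pow_self
    _ = 2 ^ (m + 1) := (pow_succ' 2 m).symm
    _ ≤ A ^ (m + 1) := Nat.pow_le_pow_left hA _

lemma card_geodClass_ge (hA : 1 < A) {k : ℕ} (hk : 1 ≤ k) :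
    (A : ℝ) ^ (2 * k) / (2 * k) ≤ Nat.card (GeodClass A (2 * k)) := by
  have hhalf : 2 * k / 2 = k := by omega
  have hprim := card_primWord_le (A := A) (2 * k) (even_two_mul k) (by omega)
  have hnon := card_not_primitive_le (A := A) (n := 2 * k) (by omega)
  have htot := card_primWord_add_card_not_primitive (A := A) (2 * k)
  rw [hhalf] at hprim hnon
  have hsmall : (2 * k : ℝ) ≤ (A : ℝ) ^ k := by exact_mod_cast two_mul_le_pow hA hk
  have hcount : (A : ℝ) ^ (2 * k) ≤ Nat.card (GeodClass A (2 * k)) * k + k * (A : ℝ) ^ k := by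
    exact_mod_cast (by omega : A ^ (2 * k) ≤ Nat.card (GeodClass A (2 * k)) * k + k * A ^ k)
  rw [div_le_iff₀ (by positivity)]
  rw [pow_mul', sq] at hcount ⊢
  nlinarith [mul_le_mul_of_nonneg_right hsmall (by positivity : (0 : ℝ) ≤ (A : ℝ) ^ k)]

lemma piA_ge (hA : 1 < A) {k : ℕ} (hk : 1 ≤ k) :
    (A : ℝ) ^ (2 * k) / (2 * k) ≤ piA A (2 * k) := by
  refine (card_geodClass_ge hA hk).trans (Nat.cast_le.mpr ?_)
  refine Nat.card_le_card_of_injective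
    (fun q => (⟨⟨2 * k, le_rfl, even_two_mul k⟩, q⟩ : Geod A (2 * k))) ?_
  intro q₁ q₂ h
  exact eq_of_heq (Sigma.mk.inj_iff.mp h).2

end Counting

section Deviations

variable {A : ℕ}

def finEquivEvenLE (k : ℕ) : Fin (k + 1) ≃ {n : ℕ // n ≤ 2 * k ∧ Even n} where
  toFun j := ⟨2 * j, by have := j.2; omega, even_two_mul _⟩
  invFun n := ⟨n.1 / 2, by have := n.2.1; omega⟩
  left_inv j := Fin.ext (by simp)
  right_inv n := Subtype.ext (Nat.two_mul_div_two_of_even n.2.2)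

lemma sum_range_pow_succ_div_sq_le {B : ℝ} (hB : 4 ≤ B) {k : ℕ} (hk : 2 ≤ k) :
    ∑ j ∈ Finset.range k, B ^ (j + 1) / (j + 1 : ℝ) ^ 2 ≤ 4 * B ^ k / k ^ 2 := by
  induction k, hk using Nat.le_induction with
  | base =>
    norm_num [Finset.sum_range_succ]
    nlinarith
  | succ k hk ih =>
    rw [Finset.sum_range_succ]
    push_cast
    have hk' : (2 : ℝ) ≤ k := by exact_mod_cast hk
    have hBk : 0 < B ^ k := by positivity
    have hstep : 4 * B ^ k / (k : ℝ) ^ 2 ≤ 3 * B ^ (k + 1) / (k + 1 : ℝ) ^ 2 := by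
      rw [div_le_div_iff₀ (by positivity) (by positivity), pow_succ B k]
      nlinarith [mul_le_mul_of_nonneg_left (show 4 * ((k : ℝ) + 1) ^ 2 ≤ 3 * B * k ^ 2 by
        nlinarith) hBk.le]
    calc _ ≤ 3 * B ^ (k + 1) / (k + 1 : ℝ) ^ 2 + B ^ (k + 1) / (k + 1 : ℝ) ^ 2 := by
          gcongr; exact ih.trans hstep
      _ = _ := by ring

lemma card_deviating_geod_le_sum (ε : ℝ) (k : ℕ) :
    Nat.card {C : Geod A (2 * k) // ε < |(wlenG C : ℝ) / (plenG C : ℝ) - ((A : ℝ) + 1)|}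
      ≤ ∑ j ∈ Finset.range (k + 1),
          Nat.card {α : PrimWord A (2 * j) // RatioDeviates ε α.1} := by
  let F : {C : Geod A (2 * k) // ε < |(wlenG C : ℝ) / (plenG C : ℝ) - ((A : ℝ) + 1)|} →
      Σ n : {n : ℕ // n ≤ 2 * k ∧ Even n}, {α : PrimWord A n // RatioDeviates ε α.1} :=
    fun C => ⟨C.1.1, C.1.2.out, C.2⟩
  have hF : Function.Injective F := by
    rintro ⟨⟨n, q⟩, hq⟩ ⟨⟨n', q'⟩, hq'⟩ h
    obtain ⟨rfl, h⟩ := Sigma.mk.inj_iff.mp h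
    have hout : q.out = q'.out := congrArg Subtype.val (eq_of_heq h)
    have hqq : q = q' := by rw [← Quot.out_eq q, ← Quot.out_eq q', hout]
    subst hqq
    rfl
  calc _ ≤ _ := Nat.card_le_card_of_injective F hF
    _ = _ := by
      rw [← Nat.card_congr (Equiv.sigmaCongrLeft (finEquivEvenLE k)), Nat.card_sigma,
        ← Fin.sum_univ_eq_sum_range
          (fun j => Nat.card {α : PrimWord A (2 * j) // RatioDeviates ε α.1})]
      rfl

lemma card_primWord_ratioDeviates_le {ε : ℝ} (hε : 0 < ε) {n : ℕ} (hn : 0 < n) :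
    (Nat.card {α : PrimWord A n // RatioDeviates ε α.1} : ℝ)
      ≤ 3 * A ^ 4 * A ^ n / (n ^ 2 * ε ^ 4) := by
  refine le_trans (Nat.cast_le.mpr ?_) (card_ratioDeviates_le hε hn)
  refine Nat.card_le_card_of_injective (fun α => ⟨α.1.1, α.2⟩) fun α β h => ?_
  exact Subtype.ext <| Subtype.ext <| by simpa using congrArg Subtype.val h

lemma card_deviating_geod_le (hA : 1 < A) {ε : ℝ} (hε : 0 < ε) {k : ℕ} (hk : 2 ≤ k) :
    (Nat.card {C : Geod A (2 * k) //
        ε < |(wlenG C : ℝ) / (plenG C : ℝ) - ((A : ℝ) + 1)|} : ℝ)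
      ≤ 3 * A ^ 4 * A ^ (2 * k) / (ε ^ 4 * k ^ 2) := by
  have hA2 : (4 : ℝ) ≤ (A : ℝ) ^ 2 := by
    have : (2 : ℝ) ≤ A := by exact_mod_cast hA
    nlinarith
  have hterm : ∀ j : ℕ,
      (Nat.card {α : PrimWord A (2 * (j + 1)) // RatioDeviates ε α.1} : ℝ)
        ≤ 3 * A ^ 4 / (4 * ε ^ 4) * (((A : ℝ) ^ 2) ^ (j + 1) / (j + 1 : ℝ) ^ 2) := by
    intro j
    refine (card_primWord_ratioDeviates_le hε (by omega)).trans_eq ?_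
    rw [← pow_mul]
    push_cast
    field_simp
    ring
  calc _ ≤ ((∑ j ∈ Finset.range (k + 1),
          Nat.card {α : PrimWord A (2 * j) // RatioDeviates ε α.1} : ℕ) : ℝ) :=
        Nat.cast_le.mpr (card_deviating_geod_le_sum ε k)
    _ = ∑ j ∈ Finset.range k,
          (Nat.card {α : PrimWord A (2 * (j + 1)) // RatioDeviates ε α.1} : ℝ) := by
        rw [Nat.cast_sum, Finset.sum_range_succ', mul_zero, Nat.card_of_isEmpty, Nat.cast_zero,
          add_zero]
    _ ≤ ∑ j ∈ Finset.range k,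
          3 * A ^ 4 / (4 * ε ^ 4) * (((A : ℝ) ^ 2) ^ (j + 1) / (j + 1 : ℝ) ^ 2) :=
        Finset.sum_le_sum fun j _ => hterm j
    _ ≤ 3 * A ^ 4 / (4 * ε ^ 4) * (4 * ((A : ℝ) ^ 2) ^ k / (k : ℝ) ^ 2) := by
        rw [← Finset.mul_sum]
        gcongr
        exact sum_range_pow_succ_div_sq_le hA2 hk
    _ = _ := by
        rw [← pow_mul]
        field_simp

end Deviations

theorem stmt4 (A : ℕ) (hA : 1 < A) :
    ∀ ε : ℝ, 0 < ε →
      Tendsto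
        (fun k : ℕ =>
          (Nat.card {C : Geod A (2 * k) //
              ε < |(wlenG C : ℝ) / (plenG C : ℝ) - ((A : ℝ) + 1)|} : ℝ) /
            (piA A (2 * k) : ℝ))
        atTop (nhds 0) := by
  intro ε hε
  refine squeeze_zero' (Eventually.of_forall fun k => by positivity)
    ?_ (tendsto_const_div_atTop_nhds_zero_nat (6 * (A : ℝ) ^ 4 / ε ^ 4))
  filter_upwards [eventually_ge_atTop 2] with k hk
  calc _ ≤ (3 * A ^ 4 * A ^ (2 * k) / (ε ^ 4 * k ^ 2)) / ((A : ℝ) ^ (2 * k) / (2 * k)) :=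
        div_le_div₀ (by positivity) (card_deviating_geod_le hA hε hk) (by positivity)
          (piA_ge hA (by omega))
    _ = 6 * (A : ℝ) ^ 4 / ε ^ 4 / k := by
        field_simp
        ring

end Winding
end

section
/- Let A > 1 be an integer. There exists a real constant ĉ such that the uniform random variable C_N on [A]^N defined by C_N(α) = (2/N) ∑_{j=1}^N log(T^j ᾱ) converges in probability to ĉ: for every ε > 0, (1/A^N)·#{α ∈ [A]^N : |C_N(α) − ĉ| > ε} → 0 as N → ∞. Moreover ĉ = lim_{k→∞} (2/A^k) ∑_{w ∈ [A]^k} log(val(w)). -/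
open Filter

namespace Winding

/-!
A purely periodic continued fraction with partial quotients `≥ 1` is determined up to `4 / 2^k`
by its first `k` partial quotients, and `log` is `1`-Lipschitz on `[1, ∞)`. Hence the averages
`ĉ_k = (2/A^k) ∑_{w ∈ [A]^k} log val(w)` form a Cauchy sequence, and replacing every
`log (T^j ᾱ)` by `log val` of the length-`k` window of `α` starting at `j` changes `C_N` by at
most `8 / 2^k`. The window terms are bounded by `log (A + 1)`, their mean is `ĉ_k / 2`, and
windows that do not overlap are independent under the uniform measure on `[A]^N`, so the
variance of the truncated `C_N` is `O(k² / N)`. Chebyshev's inequality then gives convergence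
in probability to `ĉ = lim ĉ_k`.
-/
noncomputable def cfMap : List ℕ → ℝ → ℝ
  | [], t => t
  | b :: l, t => b + 1 / cfMap l t

lemma cfMap_nil (t : ℝ) : cfMap [] t = t := rfl

lemma cfMap_cons (b : ℕ) (l : List ℕ) (t : ℝ) : cfMap (b :: l) t = b + 1 / cfMap l t := rfl

lemma cfMap_append (l₁ l₂ : List ℕ) (t : ℝ) : cfMap (l₁ ++ l₂) t = cfMap l₁ (cfMap l₂ t) := by
  induction l₁ with
  | nil => rfl
  | cons b l ih => simp only [List.cons_append, cfMap_cons, ih]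

lemma cfVal_eq_cfMap_zero (l : List ℕ) : cfVal l = cfMap l 0 := by
  induction l with
  | nil => rfl
  | cons b l ih => rw [cfVal, cfMap_cons, ih]

lemma cfVal_append (l₁ l₂ : List ℕ) : cfVal (l₁ ++ l₂) = cfMap l₁ (cfVal l₂) := by
  rw [cfVal_eq_cfMap_zero, cfMap_append, ← cfVal_eq_cfMap_zero]

lemma one_le_cfMap {l : List ℕ} (hl : ∀ b ∈ l, 0 < b) {t : ℝ} (ht : 1 ≤ t) : 1 ≤ cfMap l t := by
  induction l with
  | nil => exact ht
  | cons b l ih =>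
    have hb : (1 : ℝ) ≤ b := by exact_mod_cast hl b List.mem_cons_self
    have hpos : 0 < cfMap l t := by linarith [ih fun c hc => hl c (List.mem_cons_of_mem b hc)]
    rw [cfMap_cons]
    linarith [one_div_pos.2 hpos]

lemma abs_cfMap_cons_sub {b : ℕ} {l : List ℕ} {s t : ℝ} (hs : 0 < cfMap l s) (ht : 0 < cfMap l t) :
    |cfMap (b :: l) s - cfMap (b :: l) t| = |cfMap l s - cfMap l t| / (cfMap l s * cfMap l t) := by
  rw [cfMap_cons, cfMap_cons, add_sub_add_left_eq_sub, one_div, one_div, inv_sub_inv hs.ne' ht.ne',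
    abs_div, abs_sub_comm, abs_of_pos (mul_pos hs ht)]

lemma two_le_cfMap_cons_mul {c : ℕ} {l : List ℕ} (hl : ∀ b ∈ c :: l, 0 < b) {t : ℝ} (ht : 1 ≤ t) :
    2 ≤ cfMap (c :: l) t * cfMap l t := by
  have hc : (1 : ℝ) ≤ c := by exact_mod_cast hl c List.mem_cons_self
  have hy := one_le_cfMap (fun b hb => hl b (List.mem_cons_of_mem c hb)) ht
  rw [cfMap_cons, add_mul, one_div_mul_cancel (by positivity)]
  nlinarith

/-- Two consecutive values `x = c + 1/y` and `y` satisfy `x * y = c * y + 1 ≥ 2`, so every two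
letters contract distances by `1/4`. -/
lemma abs_cfMap_sub_le {l : List ℕ} (hl : ∀ b ∈ l, 0 < b) {s t : ℝ} (hs : 1 ≤ s) (ht : 1 ≤ t) :
    |cfMap l s - cfMap l t| ≤ 2 * |s - t| / 2 ^ l.length := by
  induction l using List.twoStepInduction with
  | nil => simp only [cfMap_nil, List.length_nil, pow_zero, div_one]; linarith [abs_nonneg (s - t)]
  | singleton b =>
    rw [abs_cfMap_cons_sub (by positivity) (by positivity)]
    simp only [cfMap_nil, List.length_singleton, pow_one]
    rw [mul_div_cancel_left₀ _ two_ne_zero]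
    exact div_le_self (abs_nonneg _) (one_le_mul_of_one_le_of_one_le hs ht)
  | cons_cons b c l ih _ =>
    have hcl : ∀ x ∈ c :: l, 0 < x := fun x hx => hl x (List.mem_cons_of_mem b hx)
    have hl' : ∀ x ∈ l, 0 < x := fun x hx => hcl x (List.mem_cons_of_mem c hx)
    have hYs := one_le_cfMap hl' hs
    have hYt := one_le_cfMap hl' ht
    have hXs := one_le_cfMap hcl hs
    have hXt := one_le_cfMap hcl ht
    have h4 : 4 ≤ cfMap (c :: l) s * cfMap l s * (cfMap (c :: l) t * cfMap l t) := by
      nlinarith [two_le_cfMap_cons_mul hcl hs, two_le_cfMap_cons_mul hcl ht]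
    rw [abs_cfMap_cons_sub (by positivity) (by positivity),
      abs_cfMap_cons_sub (by positivity) (by positivity), div_div,
      div_le_iff₀ (by positivity)]
    calc |cfMap l s - cfMap l t| ≤ 2 * |s - t| / 2 ^ l.length := ih hl'
      _ = 2 * |s - t| / 2 ^ (b :: c :: l).length * 4 := by
        simp only [List.length_cons, pow_succ]; field_simp; ring
      _ ≤ _ := by
        gcongr
        nlinarith

lemma cfVal_nonneg (l : List ℕ) : 0 ≤ cfVal l := by
  induction l with
  | nil => exact le_rfl
  | cons b l ih => rw [cfVal]; positivity

lemma one_le_cfVal {l : List ℕ} (hl : ∀ b ∈ l, 0 < b) (hne : l ≠ []) : 1 ≤ cfVal l := by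
  obtain ⟨b, l, rfl⟩ := List.exists_cons_of_ne_nil hne
  have hb : (1 : ℝ) ≤ b := by exact_mod_cast hl b List.mem_cons_self
  rw [cfVal]
  linarith [one_div_nonneg.2 (cfVal_nonneg l)]

/-- Also for `l = []`, where `cfVal [] = 0` and `0⁻¹ = 0`. -/
lemma inv_cfVal_le_one {l : List ℕ} (hl : ∀ b ∈ l, 0 < b) : (cfVal l)⁻¹ ≤ 1 := by
  rcases eq_or_ne l [] with rfl | hne
  · simp [cfVal]
  · exact inv_le_one_of_one_le₀ (one_le_cfVal hl hne)

lemma cfVal_le {A : ℕ} {l : List ℕ} (hpos : ∀ b ∈ l, 0 < b) (hA : ∀ b ∈ l, b ≤ A) :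
    cfVal l ≤ A + 1 := by
  cases l with
  | nil => simp only [cfVal]; positivity
  | cons b l =>
    have hb : (b : ℝ) ≤ A := by exact_mod_cast hA b List.mem_cons_self
    rw [cfVal, one_div]
    linarith [inv_cfVal_le_one fun c hc => hpos c (List.mem_cons_of_mem b hc)]

lemma abs_cfVal_append_sub_le {u v : List ℕ} (hpos : ∀ b ∈ u ++ v, 0 < b) (hu : u ≠ []) :
    |cfVal (u ++ v) - cfVal u| ≤ 4 / 2 ^ u.length := by
  obtain ⟨u, b, rfl⟩ := (List.eq_nil_or_concat _).resolve_left hu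
  rw [List.concat_eq_append] at hpos ⊢
  have hu : ∀ c ∈ u, 0 < c := fun c hc => hpos c (by simp [hc])
  have hbv : ∀ c ∈ b :: v, 0 < c := fun c hc => hpos c (by simp_all)
  have hb : ∀ c ∈ [b], 0 < c := fun c hc => hbv c (by simp_all)
  rw [List.append_assoc, List.singleton_append, cfVal_append, cfVal_append]
  calc |cfMap u (cfVal (b :: v)) - cfMap u (cfVal [b])|
      ≤ 2 * |cfVal (b :: v) - cfVal [b]| / 2 ^ u.length :=
        abs_cfMap_sub_le hu (one_le_cfVal hbv (List.cons_ne_nil b v))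
          (one_le_cfVal hb (List.cons_ne_nil b []))
    _ ≤ 2 * 1 / 2 ^ u.length := by
        gcongr
        simp only [cfVal, div_zero, add_zero, add_sub_cancel_left, one_div,
          abs_of_nonneg (inv_nonneg.2 (cfVal_nonneg v))]
        exact inv_cfVal_le_one fun c hc => hbv c (List.mem_cons_of_mem b hc)
    _ = 4 / 2 ^ (u ++ [b]).length := by
        rw [List.length_append, List.length_singleton, pow_succ]; field_simp; norm_num

lemma repBlock_succ' (l : List ℕ) (m : ℕ) : repBlock l (m + 1) = repBlock l m ++ l := by
  induction m with
  | zero => simp [repBlock]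
  | succ m ih =>
    change l ++ repBlock l (m + 1) = (l ++ repBlock l m) ++ l
    rw [ih, List.append_assoc]

lemma length_repBlock (l : List ℕ) (m : ℕ) : (repBlock l m).length = m * l.length := by
  induction m with
  | zero => simp [repBlock]
  | succ m ih => rw [repBlock, List.length_append, ih, Nat.succ_mul, Nat.add_comm]

lemma mem_of_mem_repBlock {l : List ℕ} {m b : ℕ} (hb : b ∈ repBlock l m) : b ∈ l := by
  induction m with
  | zero => simp [repBlock] at hb
  | succ m ih =>
    rw [repBlock, List.mem_append] at hb
    exact hb.elim id ih

lemma tendsto_cfVal_repBlock {l : List ℕ} (hl : ∀ b ∈ l, 0 < b) (hne : l ≠ []) :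
    Tendsto (fun m => cfVal (repBlock l m)) atTop (nhds (periodicVal l)) := by
  have hrep : ∀ m, repBlock l (m + 1) ≠ [] := by simp [repBlock, hne]
  have hstep : ∀ m, dist (cfVal (repBlock l (m + 1))) (cfVal (repBlock l (m + 1 + 1)))
      ≤ 4 / 2 / 2 ^ m := by
    intro m
    rw [dist_comm, Real.dist_eq, repBlock_succ' l (m + 1)]
    calc |cfVal (repBlock l (m + 1) ++ l) - cfVal (repBlock l (m + 1))|
        ≤ 4 / 2 ^ (repBlock l (m + 1)).length :=
          abs_cfVal_append_sub_le (fun b hb => by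
            rcases List.mem_append.1 hb with hb | hb
            exacts [hl b (mem_of_mem_repBlock hb), hl b hb]) (hrep m)
      _ ≤ 4 / 2 ^ (m + 1) := by
          gcongr
          · norm_num
          · rw [length_repBlock]
            exact Nat.le_mul_of_pos_right _ (List.length_pos_of_ne_nil hne)
      _ = 4 / 2 / 2 ^ m := by rw [pow_succ]; ring
  obtain ⟨a, ha⟩ := cauchySeq_tendsto_of_complete (cauchySeq_of_le_geometric_two hstep)
  have ha' := (tendsto_add_atTop_iff_nat (f := fun m => cfVal (repBlock l m)) 1).1 ha
  rwa [periodicVal, ha'.limUnder_eq]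

lemma abs_periodicVal_sub_cfVal_take_le {l : List ℕ} (hl : ∀ b ∈ l, 0 < b) (hne : l ≠ []) {k : ℕ}
    (hk : 1 ≤ k) (hkl : k ≤ l.length) :
    |periodicVal l - cfVal (l.take k)| ≤ 4 / 2 ^ k := by
  have hlim := ((tendsto_add_atTop_iff_nat 1).2 (tendsto_cfVal_repBlock hl hne)).sub_const
    (cfVal (l.take k))
  refine le_of_tendsto hlim.abs (Eventually.of_forall fun m => ?_)
  have hsplit : repBlock l (m + 1) = l.take k ++ (l.drop k ++ repBlock l m) := by
    rw [repBlock, ← List.append_assoc, List.take_append_drop]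
  have hlen : (l.take k).length = k := List.length_take_of_le hkl
  have htake : l.take k ≠ [] := by rw [← List.length_pos_iff, hlen]; omega
  rw [hsplit]
  refine (abs_cfVal_append_sub_le (fun b hb => ?_) htake).trans_eq (by rw [hlen])
  simp only [List.mem_append] at hb
  rcases hb with hb | hb | hb
  exacts [hl b (List.mem_of_mem_take hb), hl b (List.mem_of_mem_drop hb),
    hl b (mem_of_mem_repBlock hb)]

lemma one_le_periodicVal {l : List ℕ} (hl : ∀ b ∈ l, 0 < b) (hne : l ≠ []) :
    1 ≤ periodicVal l :=
  ge_of_tendsto ((tendsto_add_atTop_iff_nat 1).2 (tendsto_cfVal_repBlock hl hne))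
    (Eventually.of_forall fun m => one_le_cfVal (fun b hb => hl b (mem_of_mem_repBlock hb))
      (by simp [repBlock, hne]))

lemma abs_log_sub_log_le {a b : ℝ} (ha : 1 ≤ a) (hb : 1 ≤ b) :
    |Real.log a - Real.log b| ≤ |a - b| := by
  wlog hab : b ≤ a generalizing a b
  · rw [abs_sub_comm, abs_sub_comm a]; exact this hb ha (by linarith)
  have hb0 : 0 < b := by linarith
  rw [abs_of_nonneg (by linarith [Real.log_le_log hb0 hab]), abs_of_nonneg (by linarith),
    ← Real.log_div (by linarith) hb0.ne']
  calc Real.log (a / b) ≤ a / b - 1 := Real.log_le_sub_one_of_pos (by positivity)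
    _ = (a - b) / b := by field_simp
    _ ≤ a - b := div_le_self (by linarith) hb

section Words

variable {A n : ℕ}

lemma length_toList (w : Word A n) : (toList w).length = n := List.length_ofFn

lemma toList_ne_nil (hn : 0 < n) (w : Word A n) : toList w ≠ [] := by
  rw [← List.length_pos_iff, length_toList]; exact hn

lemma pos_of_mem_toList {w : Word A n} {b : ℕ} (hb : b ∈ toList w) : 0 < b := by
  obtain ⟨i, rfl⟩ := List.mem_ofFn.1 hb
  exact Nat.succ_pos _

lemma le_of_mem_toList {w : Word A n} {b : ℕ} (hb : b ∈ toList w) : b ≤ A := by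
  obtain ⟨i, rfl⟩ := List.mem_ofFn.1 hb
  exact (w i).isLt

lemma log_cfVal_toList_mem (w : Word A n) :
    Real.log (cfVal (toList w)) ∈ Set.Icc 0 (Real.log (A + 1)) := by
  rcases eq_or_ne (toList w) [] with h | h
  · simp only [h, cfVal, Real.log_zero, Set.mem_Icc, le_refl, true_and]
    exact Real.log_nonneg (by linarith [A.cast_nonneg (α := ℝ)])
  · have h1 := one_le_cfVal (fun b => pos_of_mem_toList) h
    exact ⟨Real.log_nonneg h1, Real.log_le_log (by linarith)
      (cfVal_le (fun b => pos_of_mem_toList) fun b => le_of_mem_toList)⟩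

variable {N : ℕ}

lemma shift_val_add_one [NeZero N] (α : Word A N) (j : Fin N) :
    shift (j + 1 : Fin N).val α = shift (j.val + 1) α := by
  funext i
  simp [shift, Fin.val_add]

end Words

section Counting

open Finset

lemma sum_comp_of_injective {ι κ X M : Type*} [Fintype ι] [Fintype κ] [Fintype X]
    [DecidableEq ι] [DecidableEq κ] [AddCommMonoid M] {f : κ → ι}
    (hf : Function.Injective f) (F : (κ → X) → M) :
    ∑ x : ι → X, F (x ∘ f)
      = (Fintype.card X ^ (Fintype.card ι - Fintype.card κ)) • ∑ y : κ → X, F y := by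
  classical
  let g := Equiv.ofInjective f hf
  calc ∑ x : ι → X, F (x ∘ f)
      = ∑ pq : (Set.range f → X) × ({i // i ∉ Set.range f} → X), F (pq.1 ∘ g) :=
        Fintype.sum_equiv (Equiv.piEquivPiSubtypeProd (· ∈ Set.range f) fun _ => X) _ _
          fun x => rfl
    _ = Fintype.card ({i // i ∉ Set.range f} → X) • ∑ p : Set.range f → X, F (p ∘ g) := by
        rw [Fintype.sum_prod_type, smul_sum]
        simp only [sum_const, card_univ]
    _ = _ := by
        rw [Fintype.card_fun, Fintype.card_subtype_compl, Set.card_range_of_injective hf]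
        congr 1
        exact Fintype.sum_equiv (g.arrowCongr (Equiv.refl X)).symm _ _ fun p => rfl

lemma sum_mul_comp_of_injective_sumElim {ι κ κ' X R : Type*} [Fintype ι] [Fintype κ]
    [Fintype κ'] [Fintype X] [DecidableEq ι] [DecidableEq κ] [DecidableEq κ']
    [NonUnitalNonAssocSemiring R] {f : κ → ι} {g : κ' → ι}
    (hfg : Function.Injective (Sum.elim f g)) (F : (κ → X) → R) (G : (κ' → X) → R) :
    ∑ x : ι → X, F (x ∘ f) * G (x ∘ g)
      = (Fintype.card X ^ (Fintype.card ι - (Fintype.card κ + Fintype.card κ')))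
          • ((∑ y, F y) * ∑ z, G z) := by
  have h := sum_comp_of_injective hfg fun w => F (w ∘ Sum.inl) * G (w ∘ Sum.inr)
  rw [Fintype.card_sum] at h
  refine h.trans ?_
  rw [sum_mul_sum, ← Fintype.sum_prod_type']
  congr 1
  exact Fintype.sum_equiv (Equiv.sumArrowEquivProdArrow κ κ' X) _ _ fun w => rfl

lemma sum_sq_sum_le {ι β : Type*} [Fintype ι] [Fintype β] (Z : ι → β → ℝ) {M : ℝ}
    (hZ : ∀ i b, |Z i b| ≤ M) (near : ι → Finset ι)
    (hfar : ∀ i j, j ∉ near i → ∑ b, Z i b * Z j b = 0) {K : ℕ}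
    (hK : ∀ i, (near i).card ≤ K) :
    ∑ b, (∑ i, Z i b) ^ 2 ≤ Fintype.card ι * K * (Fintype.card β * M ^ 2) := by
  have hpair : ∀ i j, ∑ b, Z i b * Z j b ≤ Fintype.card β * M ^ 2 := fun i j => by
    rw [← nsmul_eq_mul, ← card_univ, ← sum_const, sq]
    refine sum_le_sum fun b _ => (le_abs_self _).trans ?_
    rw [abs_mul]
    exact mul_le_mul (hZ i b) (hZ j b) (abs_nonneg _) ((abs_nonneg _).trans (hZ i b))
  calc ∑ b, (∑ i, Z i b) ^ 2 = ∑ i, ∑ j, ∑ b, Z i b * Z j b := by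
        simp_rw [sq, sum_mul_sum]
        rw [sum_comm]
        exact sum_congr rfl fun i _ => sum_comm
    _ = ∑ i, ∑ j ∈ near i, ∑ b, Z i b * Z j b :=
        sum_congr rfl fun i _ => (sum_subset (subset_univ _) fun j _ hj => hfar i j hj).symm
    _ ≤ ∑ i : ι, (K : ℝ) * (Fintype.card β * M ^ 2) := by
        refine sum_le_sum fun i _ => (sum_le_sum fun j _ => hpair i j).trans ?_
        rw [sum_const, nsmul_eq_mul]
        gcongr
        exact_mod_cast hK i
    _ = _ := by rw [sum_const, card_univ, nsmul_eq_mul, mul_assoc]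

lemma card_lt_abs_mul_sq_le {β : Type*} [Fintype β] (Y : β → ℝ) {t : ℝ} (ht : 0 ≤ t) :
    (Nat.card {b // t < |Y b|} : ℝ) * t ^ 2 ≤ ∑ b, Y b ^ 2 := by
  classical
  rw [Nat.card_eq_fintype_card, Fintype.card_subtype, ← nsmul_eq_mul]
  calc _ ≤ ∑ b ∈ univ.filter (fun b => t < |Y b|), Y b ^ 2 :=
        card_nsmul_le_sum _ _ _ fun b hb => by
          rw [← sq_abs (Y b)]
          exact pow_le_pow_left₀ ht (mem_filter.1 hb).2.le 2
    _ ≤ ∑ b, Y b ^ 2 := sum_le_sum_of_subset_of_nonneg (filter_subset _ _) fun _ _ _ => sq_nonneg _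

end Counting

section Windows

variable {A N k : ℕ} (hkN : k ≤ N)

def windowPos (c : Fin N) : Fin k → Fin N := fun t => Fin.castLE hkN t + c

lemma toList_comp_windowPos (α : Word A N) (c : Fin N) :
    toList (α ∘ windowPos hkN c) = (toList (shift c.val α)).take k := by
  apply List.ext_getElem
  · simp [length_toList, hkN]
  · intro i h _
    simp only [toList, List.getElem_ofFn, List.getElem_take, letter, Function.comp_apply]
    rfl

lemma abs_log_Tpow_sub_le (hk : 1 ≤ k) (α : Word A N) (c : Fin N) :
    |Real.log (Tpow α c.val) - Real.log (cfVal (toList (α ∘ windowPos hkN c)))| ≤ 4 / 2 ^ k := by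
  have hpos : ∀ b ∈ toList (shift c.val α), 0 < b := fun b => pos_of_mem_toList
  have hne := toList_ne_nil (by omega) (shift c.val α)
  rw [toList_comp_windowPos]
  refine (abs_log_sub_log_le (one_le_periodicVal hpos hne) ?_).trans
    (abs_periodicVal_sub_cfVal_take_le hpos hne hk (by rw [length_toList]; exact hkN))
  exact one_le_cfVal (fun b hb => hpos b (List.mem_of_mem_take hb))
    (by rw [← List.length_pos_iff, List.length_take, length_toList]; omega)

lemma windowPos_injective (c : Fin N) : Function.Injective (windowPos hkN c) :=
  fun _ _ h => Fin.castLE_injective hkN (add_right_cancel h)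

/-- The starting points of the windows that can overlap the window starting at `i`. -/
def nearWindows (i : Fin N) : Finset (Fin N) :=
  Finset.univ.image fun p : Fin k × Fin k => Fin.castLE hkN p.1 + i - Fin.castLE hkN p.2

lemma card_nearWindows_le (i : Fin N) : (nearWindows hkN i).card ≤ k ^ 2 :=
  Finset.card_image_le.trans (by simp [sq])

variable [NeZero N]

lemma eq_of_windowPos_eq {i j : Fin N} {t₁ t₂ : Fin k}
    (h : windowPos hkN i t₁ = windowPos hkN j t₂) :
    j = Fin.castLE hkN t₁ + i - Fin.castLE hkN t₂ := by
  rw [eq_sub_iff_add_eq, add_comm]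
  exact h.symm

lemma sum_mul_comp_windowPos_eq_zero {F : Word A k → ℝ} (hF : ∑ w, F w = 0) {i j : Fin N}
    (hij : j ∉ nearWindows hkN i) :
    ∑ α : Word A N, F (α ∘ windowPos hkN i) * F (α ∘ windowPos hkN j) = 0 := by
  have hdisj : Function.Injective (Sum.elim (windowPos hkN i) (windowPos hkN j)) :=
    (windowPos_injective hkN i).sumElim (windowPos_injective hkN j) fun t₁ t₂ h =>
      hij (Finset.mem_image.2 ⟨(t₁, t₂), Finset.mem_univ _, (eq_of_windowPos_eq hkN h).symm⟩)
  rw [sum_mul_comp_of_injective_sumElim hdisj, hF, zero_mul, smul_zero]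

end Windows

section Constant

open Finset

variable {A : ℕ}

noncomputable def cApprox (A k : ℕ) : ℝ :=
  2 / (A : ℝ) ^ k * ∑ w : Word A k, Real.log (cfVal (toList w))

lemma card_word (A n : ℕ) : (Fintype.card (Word A n) : ℝ) = (A : ℝ) ^ n := by simp

lemma cApprox_mem (hA : 0 < A) (k : ℕ) : cApprox A k ∈ Set.Icc 0 (2 * Real.log (A + 1)) := by
  have hbound : ∑ w : Word A k, Real.log (cfVal (toList w)) ≤ (A : ℝ) ^ k * Real.log (A + 1) := by
    rw [← card_word, ← nsmul_eq_mul, ← card_univ]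
    exact sum_le_card_nsmul _ _ _ fun w _ => (log_cfVal_toList_mem w).2
  have hsum : 0 ≤ ∑ w : Word A k, Real.log (cfVal (toList w)) :=
    sum_nonneg fun w _ => (log_cfVal_toList_mem w).1
  have hAk : (0 : ℝ) < (A : ℝ) ^ k := by positivity
  refine ⟨by unfold cApprox; positivity, ?_⟩
  rw [cApprox, div_mul_eq_mul_div, div_le_iff₀ hAk]
  nlinarith

lemma abs_cApprox_succ_sub_le (hA : 0 < A) {k : ℕ} (hk : 1 ≤ k) :
    |cApprox A (k + 1) - cApprox A k| ≤ 8 / 2 ^ k := by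
  have hinit : ∑ w : Word A (k + 1), Real.log (cfVal (toList (w ∘ Fin.castSucc)))
      = A * ∑ v : Word A k, Real.log (cfVal (toList v)) := by
    rw [sum_comp_of_injective (Fin.castSucc_injective k) fun v : Word A k =>
      Real.log (cfVal (toList v))]
    simp
  have hterm : ∀ w : Word A (k + 1),
      |Real.log (cfVal (toList w)) - Real.log (cfVal (toList (w ∘ Fin.castSucc)))|
        ≤ 4 / 2 ^ k := by
    intro w
    have hsplit : toList w = toList (w ∘ Fin.castSucc) ++ [letter w (Fin.last k)] := by
      rw [toList, List.ofFn_succ', List.concat_eq_append]; rfl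
    have hne := toList_ne_nil (by omega) (w ∘ Fin.castSucc)
    refine (abs_log_sub_log_le (one_le_cfVal (fun b => pos_of_mem_toList)
      (toList_ne_nil (by omega) w)) (one_le_cfVal (fun b => pos_of_mem_toList) hne)).trans ?_
    rw [hsplit]
    refine (abs_cfVal_append_sub_le (fun b hb => ?_) hne).trans_eq (by rw [length_toList])
    rw [← hsplit] at hb
    exact pos_of_mem_toList hb
  have hAk : (0 : ℝ) < (A : ℝ) ^ (k + 1) := by positivity
  have hprev : cApprox A k = 2 / (A : ℝ) ^ (k + 1) *
      ∑ w : Word A (k + 1), Real.log (cfVal (toList (w ∘ Fin.castSucc))) := by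
    rw [hinit, cApprox, pow_succ]
    field_simp
  rw [hprev, cApprox, ← mul_sub, ← sum_sub_distrib, abs_mul, abs_of_pos (by positivity)]
  calc 2 / (A : ℝ) ^ (k + 1) * |∑ w : Word A (k + 1), (Real.log (cfVal (toList w))
        - Real.log (cfVal (toList (w ∘ Fin.castSucc))))|
      ≤ 2 / (A : ℝ) ^ (k + 1) * ((A : ℝ) ^ (k + 1) * (4 / 2 ^ k)) := by
        gcongr
        rw [← card_word, ← nsmul_eq_mul, ← card_univ]
        exact (abs_sum_le_sum_abs _ _).trans (sum_le_card_nsmul _ _ _ fun w _ => hterm w)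
    _ = 8 / 2 ^ k := by field_simp; ring

lemma exists_tendsto_cApprox (hA : 0 < A) : ∃ c, Tendsto (cApprox A) atTop (nhds c) := by
  have hstep : ∀ n, dist (cApprox A (n + 1)) (cApprox A (n + 1 + 1)) ≤ 8 / 2 / 2 ^ n := fun n => by
    rw [dist_comm, Real.dist_eq]
    exact (abs_cApprox_succ_sub_le hA (by omega)).trans_eq (by rw [pow_succ]; ring)
  obtain ⟨c, hc⟩ := cauchySeq_tendsto_of_complete (cauchySeq_of_le_geometric_two hstep)
  exact ⟨c, (tendsto_add_atTop_iff_nat 1).1 hc⟩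

end Constant

section Concentration

open Finset

variable {A N k : ℕ} (hkN : k ≤ N)

/-- `C_N` with each `T^c ᾱ` replaced by the value of its first `k` partial quotients. -/
noncomputable def windowAvg (α : Word A N) : ℝ :=
  2 / N * ∑ c : Fin N, Real.log (cfVal (toList (α ∘ windowPos hkN c)))

lemma abs_sum_log_Tpow_sub_windowAvg_le (hk : 1 ≤ k) (α : Word A N) :
    |2 / N * ∑ c : Fin N, Real.log (Tpow α c.val) - windowAvg hkN α| ≤ 8 / 2 ^ k := by
  have hN : (0 : ℝ) < N := by exact_mod_cast (show 0 < N by omega)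
  rw [windowAvg, ← mul_sub, ← sum_sub_distrib, abs_mul, abs_of_pos (by positivity)]
  calc 2 / (N : ℝ) * |∑ c : Fin N, (Real.log (Tpow α c.val)
        - Real.log (cfVal (toList (α ∘ windowPos hkN c))))|
      ≤ 2 / N * (N * (4 / 2 ^ k)) := by
        gcongr
        refine (abs_sum_le_sum_abs _ _).trans ?_
        simpa using sum_le_card_nsmul univ _ _ fun c _ => abs_log_Tpow_sub_le hkN hk α c
    _ = 8 / 2 ^ k := by field_simp; ring

/-- Windows that do not overlap are independent, so at most `k²` of the `N²` covariances in the
variance of `windowAvg` are nonzero. -/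
lemma card_lt_abs_windowAvg_sub_mul_sq_le [NeZero N] (hA : 0 < A) {t : ℝ} (ht : 0 ≤ t) :
    (Nat.card {α : Word A N // t < |windowAvg hkN α - cApprox A k|} : ℝ) * t ^ 2
      ≤ 4 * k ^ 2 * ((A : ℝ) ^ N * Real.log (A + 1) ^ 2) / N := by
  set μ := cApprox A k / 2
  set Z : Fin N → Word A N → ℝ := fun c α => Real.log (cfVal (toList (α ∘ windowPos hkN c))) - μ
  have hN : (N : ℝ) ≠ 0 := Nat.cast_ne_zero.2 (NeZero.ne N)
  have hdev : ∀ α, windowAvg hkN α - cApprox A k = 2 / N * ∑ c, Z c α := fun α => by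
    simp only [Z, windowAvg, sum_sub_distrib, sum_const, card_univ, Fintype.card_fin, μ,
      nsmul_eq_mul]
    field_simp
  have hcentred : ∑ w : Word A k, (Real.log (cfVal (toList w)) - μ) = 0 := by
    rw [sum_sub_distrib, sum_const, card_univ, nsmul_eq_mul, card_word]
    simp only [μ, cApprox]
    field_simp
    ring
  have hZ : ∀ c α, |Z c α| ≤ Real.log (A + 1) := fun c α => by
    have h1 := log_cfVal_toList_mem (α ∘ windowPos hkN c)
    have h2 := cApprox_mem hA k
    simp only [Set.mem_Icc] at h1 h2
    simp only [Z, μ]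
    exact abs_le.2 ⟨by linarith, by linarith⟩
  calc _ ≤ ∑ α, (windowAvg hkN α - cApprox A k) ^ 2 := card_lt_abs_mul_sq_le _ ht
    _ = (2 / N) ^ 2 * ∑ α, (∑ c, Z c α) ^ 2 := by simp_rw [hdev, mul_pow, ← mul_sum]
    _ ≤ (2 / N) ^ 2 * (N * (k ^ 2 : ℕ) * ((A : ℝ) ^ N * Real.log (A + 1) ^ 2)) := by
        gcongr
        simpa using sum_sq_sum_le Z hZ (nearWindows hkN)
          (fun i j hij => sum_mul_comp_windowPos_eq_zero hkN hcentred hij)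
          (card_nearWindows_le hkN)
    _ = _ := by push_cast; field_simp; ring

end Concentration

lemma sum_log_Tpow_succ {A N : ℕ} [NeZero N] (α : Word A N) :
    ∑ j : Fin N, Real.log (Tpow α (j.1 + 1)) = ∑ c : Fin N, Real.log (Tpow α c.1) :=
  Fintype.sum_equiv (Equiv.addRight 1) _ _ fun j => by
    rw [Equiv.coe_addRight, Tpow, Tpow, shift_val_add_one]

lemma tendsto_card_lt_abs_sub_div_pow {A : ℕ} (hA : 0 < A) {c : ℝ}
    (hc : Tendsto (cApprox A) atTop (nhds c)) {ε : ℝ} (hε : 0 < ε) :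
    Tendsto (fun N : ℕ => (Nat.card {α : Word A N //
        ε < |2 / (N : ℝ) * ∑ j : Fin N, Real.log (Tpow α (j.1 + 1)) - c|} : ℝ) / (A : ℝ) ^ N)
      atTop (nhds 0) := by
  have hδ : Tendsto (fun k : ℕ => (8 : ℝ) / 2 ^ k) atTop (nhds 0) :=
    tendsto_const_nhds.div_atTop (tendsto_pow_atTop_atTop_of_one_lt one_lt_two)
  obtain ⟨k, hk, hkδ, hkc⟩ : ∃ k, 1 ≤ k ∧ 8 / 2 ^ k < ε / 3 ∧ |cApprox A k - c| < ε / 3 :=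
    ((eventually_ge_atTop 1).and ((hδ.eventually (gt_mem_nhds (by positivity))).and
      (hc.eventually (Metric.ball_mem_nhds c (by positivity))))).exists
  set C := 4 * k ^ 2 * Real.log (A + 1) ^ 2 / (ε / 3) ^ 2
  refine squeeze_zero' (Eventually.of_forall fun N => by positivity) ?_
    (tendsto_const_div_atTop_nhds_zero_nat C)
  filter_upwards [eventually_ge_atTop k] with N hkN
  have : NeZero N := ⟨by omega⟩
  have hbad : ∀ α : Word A N, ε < |2 / (N : ℝ) * ∑ j : Fin N, Real.log (Tpow α (j.1 + 1)) - c| →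
      ε / 3 < |windowAvg hkN α - cApprox A k| := fun α hα => by
    rw [sum_log_Tpow_succ] at hα
    have := abs_sum_log_Tpow_sub_windowAvg_le hkN hk α
    have := abs_sub_le (2 / (N : ℝ) * ∑ c : Fin N, Real.log (Tpow α c.1)) (windowAvg hkN α) c
    have := abs_sub_le (windowAvg hkN α) (cApprox A k) c
    linarith
  have hcard := Nat.card_le_card_of_injective _ (Subtype.impEmbedding _ _ hbad).injective
  have hcheb := card_lt_abs_windowAvg_sub_mul_sq_le hkN hA (t := ε / 3) (by positivity)
  rw [div_le_iff₀ (by positivity)]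
  calc _ ≤ (Nat.card {α : Word A N // ε / 3 < |windowAvg hkN α - cApprox A k|} : ℝ) := by
        exact_mod_cast hcard
    _ ≤ 4 * k ^ 2 * ((A : ℝ) ^ N * Real.log (A + 1) ^ 2) / N / (ε / 3) ^ 2 :=
        (le_div_iff₀ (by positivity)).2 hcheb
    _ = C / N * (A : ℝ) ^ N := by ring

theorem stmt16 (A : ℕ) (hA : 1 < A) :
    ∃ c : ℝ,
      (∀ ε : ℝ, 0 < ε →
        Tendsto
          (fun N : ℕ =>
            (Nat.card {α : Word A N //
                ε < |2 / (N : ℝ) * ∑ j : Fin N, Real.log (Tpow α (j.1 + 1)) - c|} : ℝ) /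
              (A : ℝ) ^ N)
          atTop (nhds 0)) ∧
      Tendsto
        (fun k : ℕ => 2 / (A : ℝ) ^ k * ∑ w : Word A k, Real.log (cfVal (toList w)))
        atTop (nhds c) := by
  obtain ⟨c, hc⟩ := exists_tendsto_cApprox (by omega : 0 < A)
  exact ⟨c, fun ε hε => tendsto_card_lt_abs_sub_div_pow (by omega) hc hε, hc⟩

end Winding
end
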